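/- arXiv:2206.12767 — 8 statements merged into one kernel-verified Lean document; each statement's English description precedes it below -/
import Mathlib

section
/- If f: X → ℝ is twice continuously differentiable on a box X = [a,b] ⊂ ℝ^m and α ≥ max{0, -min_{x∈X} λ_min(x)}, where λ_min(x) is the smallest eigenvalue of the Hessian of f at x, then the function F(x) = f(x) + (α/2)·∑_{i=1}^m (a_i - x_i)(b_i - x_i) is convex on X. -/
open Finset

/-- αBB relaxation convexity: if `α ≥ max{0, -min λ_min}` then
`F(x) = f(x) + (α/2)∑ (aᵢ-xᵢ)(bᵢ-xᵢ)` is convex on the box `[a,b]`. -/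
theorem stmt0 (m : ℕ) (a b : Fin m → ℝ) (hab : ∀ i, a i < b i)
    (f : (Fin m → ℝ) → ℝ) (hf : ContDiff ℝ 2 f)
    (lammin : (Fin m → ℝ) → ℝ)
    (hlam : ∀ x ∈ Set.Icc a b, ∀ v : Fin m → ℝ,
      lammin x * (∑ i, v i ^ 2) ≤ iteratedFDeriv ℝ 2 f x ![v, v])
    (α : ℝ) (hα0 : 0 ≤ α) (hα : ∀ x ∈ Set.Icc a b, -lammin x ≤ α) :
    ConvexOn ℝ (Set.Icc a b)
      (fun x => f x + α / 2 * ∑ i, (a i - x i) * (b i - x i)) := by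
  have hD : Convex ℝ (Set.Icc a b) := convex_Icc a b
  refine ⟨hD, ?_⟩
  intro x hx y hy p q hp hq hpq
  set v : Fin m → ℝ := y - x with hv
  -- the function restricted to the segment, written coordinatewise
  set g : ℝ → ℝ := fun t => f (x + t • v)
    + α / 2 * ∑ i, (a i - (x i + t * v i)) * (b i - (x i + t * v i)) with hgdef
  set g1 : ℝ → ℝ := fun t => fderiv ℝ f (x + t • v) v
    + α / 2 * ∑ i, (-(v i) * (b i - (x i + t * v i)) + (a i - (x i + t * v i)) * (-(v i)))
    with hg1def
  set g2 : ℝ → ℝ := fun t => iteratedFDeriv ℝ 2 f (x + t • v) ![v, v]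
    + α / 2 * ∑ i, (v i * v i + v i * v i) with hg2def
  have hmem : ∀ t ∈ Set.Icc (0:ℝ) 1, x + t • v ∈ Set.Icc a b := by
    intro t ht
    have hxy : x + t • v = (1 - t) • x + t • y := by
      funext i
      simp [hv, Pi.smul_apply, smul_eq_mul]
      ring
    rw [hxy]
    exact hD hx hy (by linarith [ht.2]) ht.1 (by ring)
  have hline : ∀ t : ℝ, HasDerivAt (fun t : ℝ => x + t • v) v t := fun t => by
    simpa using ((hasDerivAt_id t).smul_const v).const_add x
  have hA : ∀ i (t : ℝ), HasDerivAt (fun s : ℝ => a i - (x i + s * v i)) (-(v i)) t := by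
    intro i t
    have : HasDerivAt (fun s : ℝ => x i + s * v i) (v i) t := by
      simpa using ((hasDerivAt_id t).mul_const (v i)).const_add (x i)
    simpa using this.const_sub (a i)
  have hB : ∀ i (t : ℝ), HasDerivAt (fun s : ℝ => b i - (x i + s * v i)) (-(v i)) t := by
    intro i t
    have : HasDerivAt (fun s : ℝ => x i + s * v i) (v i) t := by
      simpa using ((hasDerivAt_id t).mul_const (v i)).const_add (x i)
    simpa using this.const_sub (b i)
  have hfd : ∀ t : ℝ, HasDerivAt (fun s : ℝ => f (x + s • v)) (fderiv ℝ f (x + t • v) v) t := by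
    intro t
    exact ((hf.differentiable (by norm_num) (x + t • v)).hasFDerivAt).comp_hasDerivAt t (hline t)
  have hg1 : ∀ t : ℝ, HasDerivAt g (g1 t) t := by
    intro t
    have hquad : HasDerivAt
        (fun s : ℝ => α / 2 * ∑ i, (a i - (x i + s * v i)) * (b i - (x i + s * v i)))
        (α / 2 * ∑ i, (-(v i) * (b i - (x i + t * v i)) + (a i - (x i + t * v i)) * (-(v i)))) t :=
      (HasDerivAt.fun_sum fun i _ => (hA i t).mul (hB i t)).const_mul (α / 2)
    exact (hfd t).add hquad
  have hfderiv1 : ContDiff ℝ 1 (fderiv ℝ f) := hf.fderiv_right (by norm_num)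
  have hg2 : ∀ t : ℝ, HasDerivAt g1 (g2 t) t := by
    intro t
    have hcomp : HasDerivAt (fun s : ℝ => fderiv ℝ f (x + s • v))
        (fderiv ℝ (fderiv ℝ f) (x + t • v) v) t :=
      ((hfderiv1.differentiable (by norm_num) (x + t • v)).hasFDerivAt).comp_hasDerivAt t (hline t)
    have happ : HasDerivAt (fun s : ℝ => fderiv ℝ f (x + s • v) v)
        (iteratedFDeriv ℝ 2 f (x + t • v) ![v, v]) t := by
      have := hcomp.clm_apply (hasDerivAt_const t v)
      simp only [map_zero, add_zero] at this
      rw [iteratedFDeriv_two_apply]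
      simpa using this
    have hquad2 : HasDerivAt
        (fun s : ℝ => α / 2 * ∑ i,
          (-(v i) * (b i - (x i + s * v i)) + (a i - (x i + s * v i)) * (-(v i))))
        (α / 2 * ∑ i, (v i * v i + v i * v i)) t := by
      have hterm : ∀ i, HasDerivAt
          (fun s : ℝ => -(v i) * (b i - (x i + s * v i)) + (a i - (x i + s * v i)) * (-(v i)))
          (v i * v i + v i * v i) t := by
        intro i
        have h1 := (hB i t).const_mul (-(v i))
        have h2 := (hA i t).mul_const (-(v i))
        have := h1.fun_add h2
        rw [show v i * v i + v i * v i = -v i * -v i + -v i * -v i by ring]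
        exact this
      exact (HasDerivAt.fun_sum fun i _ => hterm i).const_mul (α / 2)
    exact happ.add hquad2
  have hgc : ConvexOn ℝ (Set.Icc (0:ℝ) 1) g := by
    apply convexOn_of_hasDerivWithinAt2_nonneg (convex_Icc 0 1)
      (Continuous.continuousOn (by
        rw [continuous_iff_continuousAt]; exact fun t => (hg1 t).continuousAt))
      (fun t _ => (hg1 t).hasDerivWithinAt) (fun t _ => (hg2 t).hasDerivWithinAt)
    intro t ht
    have hpt := hmem t (interior_subset ht)
    have hS : (0:ℝ) ≤ ∑ i, v i ^ 2 := Finset.sum_nonneg fun i _ => sq_nonneg _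
    have h1 := hlam _ hpt v
    have h2 := hα _ hpt
    have hsum : ∑ i, (v i * v i + v i * v i) = 2 * ∑ i, v i ^ 2 := by
      rw [Finset.mul_sum]; exact Finset.sum_congr rfl fun i _ => by ring
    have : g2 t = iteratedFDeriv ℝ 2 f (x + t • v) ![v, v] + α * ∑ i, v i ^ 2 := by
      rw [hg2def]; dsimp only; rw [hsum]; ring
    rw [this]
    nlinarith [mul_nonneg (by linarith : (0:ℝ) ≤ lammin (x + t • v) + α) hS]
  have h0 : (0:ℝ) ∈ Set.Icc (0:ℝ) 1 := by norm_num
  have h1 : (1:ℝ) ∈ Set.Icc (0:ℝ) 1 := by norm_num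
  have key := hgc.2 h0 h1 hp hq hpq
  have hq' : p • (0:ℝ) + q • (1:ℝ) = q := by simp
  rw [hq'] at key
  have hxq : x + q • v = p • x + q • y := by
    funext i
    have hp1 : p = 1 - q := by linarith
    simp [hv, Pi.smul_apply, smul_eq_mul, hp1]
    ring
  have hg0 : g 0 = f x + α / 2 * ∑ i, (a i - x i) * (b i - x i) := by
    rw [hgdef]; simp
  have hg1v : g 1 = f y + α / 2 * ∑ i, (a i - y i) * (b i - y i) := by
    rw [hgdef]; dsimp only
    have : x + (1:ℝ) • v = y := by funext i; simp [hv]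
    rw [this]
    congr 2
    refine Finset.sum_congr rfl fun i _ => ?_
    first
    | rfl
    | (simp [hv]; try ring)
  have hgq : g q = f (p • x + q • y)
      + α / 2 * ∑ i, (a i - (p • x + q • y) i) * (b i - (p • x + q • y) i) := by
    rw [hgdef]; dsimp only
    rw [← hxq]
    first
    | rfl
    | (congr 2
       refine Finset.sum_congr rfl fun i _ => ?_
       first
       | rfl
       | simp)
  rw [hg0, hg1v, hgq] at key
  simpa using key
end

section
/- For the recursive bisection scheme on a box X = [a,b] ⊂ ℝ^m that always splits along a longest edge, the maximal squared diameter after t levels of subdivision satisfies |T(t)| ≤ ‖b - a‖₂²·(1 - 3/(4m))^t; in particular |T(t)| → 0 as t → ∞. -/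
/-!
Halving the longest edge `e_s` of a box lowers its squared diameter `∑ i, e_i ^ 2` by
`3/4 e_s ^ 2`, and `e_s ^ 2` is at least the mean `(∑ i, e_i ^ 2) / m`; so each bisection
multiplies the squared diameter by at most `1 - 3/(4m)`.
-/

open Finset
open scoped Classical

/-- The smallest index of a longest edge of the box `[B.1, B.2]`. -/
noncomputable def splitIndex {m : ℕ} [NeZero m] (B : (Fin m → ℝ) × (Fin m → ℝ)) : Fin m :=
  (Finset.univ.filter fun i => ∀ j, B.2 j - B.1 j ≤ B.2 i - B.1 i).min'
    (by
      obtain ⟨i, -, hi⟩ := Finset.exists_max_image (Finset.univ : Finset (Fin m))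
        (fun i => B.2 i - B.1 i) Finset.univ_nonempty
      exact ⟨i, Finset.mem_filter.mpr
        ⟨Finset.mem_univ _, fun j => hi j (Finset.mem_univ _)⟩⟩)

/-- The first half of the midpoint bisection along the longest edge. -/
noncomputable def child1 {m : ℕ} [NeZero m] (B : (Fin m → ℝ) × (Fin m → ℝ)) :
    (Fin m → ℝ) × (Fin m → ℝ) :=
  (B.1, Function.update B.2 (splitIndex B) ((B.1 (splitIndex B) + B.2 (splitIndex B)) / 2))

/-- The second half of the midpoint bisection along the longest edge. -/
noncomputable def child2 {m : ℕ} [NeZero m] (B : (Fin m → ℝ) × (Fin m → ℝ)) :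
    (Fin m → ℝ) × (Fin m → ℝ) :=
  (Function.update B.1 (splitIndex B) ((B.1 (splitIndex B) + B.2 (splitIndex B)) / 2), B.2)

/-- The interval-division operator: `ID B t` is the collection of sub-boxes obtained after
`t` levels of longest-edge midpoint bisection. -/
noncomputable def ID {m : ℕ} [NeZero m] :
    ((Fin m → ℝ) × (Fin m → ℝ)) → ℕ → Set ((Fin m → ℝ) × (Fin m → ℝ))
  | B, 0 => {B}
  | B, t + 1 => ID (child1 B) t ∪ ID (child2 B) t

lemma sum_sq_update_half_le {ι : Type*} [Fintype ι] [DecidableEq ι] {e : ι → ℝ} (he : 0 ≤ e)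
    {s : ι} (hs : ∀ i, e i ≤ e s) :
    ∑ i, Function.update e s (e s / 2) i ^ 2 ≤
      (∑ i, e i ^ 2) * (1 - 3 / (4 * Fintype.card ι)) := by
  have hupdate : ∑ i, Function.update e s (e s / 2) i ^ 2 = ∑ i, e i ^ 2 - 3 / 4 * e s ^ 2 := by
    rw [sum_congr rfl fun i _ => Function.apply_update (fun _ x => x ^ 2) e s (e s / 2) i,
      sum_update_of_mem (mem_univ s), sum_eq_add_sum_sdiff_singleton_of_mem (mem_univ s)]
    ring
  have hlongest : ∑ i, e i ^ 2 ≤ Fintype.card ι * e s ^ 2 := by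
    simpa using sum_le_card_nsmul univ (e · ^ 2) (e s ^ 2)
      fun i _ => pow_le_pow_left₀ (he i) (hs i) 2
  have hcard : (0 : ℝ) < Fintype.card ι := by exact_mod_cast Fintype.card_pos_iff.mpr ⟨s⟩
  have hmean : (∑ i, e i ^ 2) * (3 / (4 * Fintype.card ι)) ≤ 3 / 4 * e s ^ 2 := by
    rw [mul_div_assoc', div_le_iff₀ (by positivity)]
    linarith
  rw [hupdate]
  linarith

lemma one_sub_three_div_four_mul_nonneg {n : ℝ} (hn : 1 ≤ n) : 0 ≤ 1 - 3 / (4 * n) := by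
  rw [sub_nonneg, div_le_one (by positivity)]
  linarith

lemma one_sub_three_div_four_mul_lt_one {n : ℝ} (hn : 0 < n) : 1 - 3 / (4 * n) < 1 := by
  have : 0 < 3 / (4 * n) := by positivity
  linarith

namespace LongestEdgeBisection

variable {m : ℕ} [NeZero m]

/-- `‖b - a‖₂²` for the box `B = (a, b)`; the paper's `|T(t)|` is its maximum over `ID X t`. -/
noncomputable def sqDiam (B : (Fin m → ℝ) × (Fin m → ℝ)) : ℝ := ∑ i, (B.2 - B.1) i ^ 2

lemma edge_le_edge_splitIndex (B : (Fin m → ℝ) × (Fin m → ℝ)) (j : Fin m) :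
    (B.2 - B.1) j ≤ (B.2 - B.1) (splitIndex B) := by
  have h : splitIndex B ∈ univ.filter fun i => ∀ j, B.2 j - B.1 j ≤ B.2 i - B.1 i :=
    Finset.min'_mem _ _
  exact (Finset.mem_filter.mp h).2 j

lemma edge_child (B C : (Fin m → ℝ) × (Fin m → ℝ)) (hC : C = child1 B ∨ C = child2 B) :
    C.2 - C.1 = Function.update (B.2 - B.1) (splitIndex B) ((B.2 - B.1) (splitIndex B) / 2) := by
  funext i
  by_cases h : i = splitIndex B
  · subst h
    rcases hC with rfl | rfl <;> simp only [child1, child2, Pi.sub_apply, Function.update_self] <;>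
      ring
  · rcases hC with rfl | rfl <;> simp [child1, child2, Function.update_of_ne h]

lemma child_le (B C : (Fin m → ℝ) × (Fin m → ℝ)) (hB : B.1 ≤ B.2)
    (hC : C = child1 B ∨ C = child2 B) : C.1 ≤ C.2 := by
  rw [← sub_nonneg, edge_child B C hC, le_update_iff]
  have hedge : 0 ≤ B.2 - B.1 := sub_nonneg.2 hB
  exact ⟨div_nonneg (hedge _) zero_le_two, fun j _ => hedge j⟩

lemma sqDiam_child_le (B C : (Fin m → ℝ) × (Fin m → ℝ)) (hB : B.1 ≤ B.2)
    (hC : C = child1 B ∨ C = child2 B) : sqDiam C ≤ sqDiam B * (1 - 3 / (4 * (m : ℝ))) := by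
  have h := sum_sq_update_half_le (sub_nonneg.2 hB) (edge_le_edge_splitIndex B)
  rwa [Fintype.card_fin, ← edge_child B C hC] at h

lemma sqDiam_le_of_mem_ID {t : ℕ} {B C : (Fin m → ℝ) × (Fin m → ℝ)} (hB : B.1 ≤ B.2)
    (hC : C ∈ ID B t) : sqDiam C ≤ sqDiam B * (1 - 3 / (4 * (m : ℝ))) ^ t := by
  induction t generalizing B with
  | zero =>
    obtain rfl : C = B := hC
    simp
  | succ t ih =>
    obtain ⟨D, hD, hCD⟩ : ∃ D, (D = child1 B ∨ D = child2 B) ∧ C ∈ ID D t := by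
      rcases hC with h | h
      exacts [⟨_, .inl rfl, h⟩, ⟨_, .inr rfl, h⟩]
    have hq : 0 ≤ 1 - 3 / (4 * (m : ℝ)) :=
      one_sub_three_div_four_mul_nonneg (by exact_mod_cast NeZero.one_le)
    calc sqDiam C ≤ sqDiam D * (1 - 3 / (4 * (m : ℝ))) ^ t := ih (child_le B D hB hD) hCD
      _ ≤ sqDiam B * (1 - 3 / (4 * (m : ℝ))) * (1 - 3 / (4 * (m : ℝ))) ^ t := by
        gcongr
        exact sqDiam_child_le B D hB hD
      _ = sqDiam B * (1 - 3 / (4 * (m : ℝ))) ^ (t + 1) := by ring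

lemma ID_nonempty (B : (Fin m → ℝ) × (Fin m → ℝ)) (t : ℕ) : (ID B t).Nonempty := by
  induction t generalizing B with
  | zero => exact ⟨B, rfl⟩
  | succ t ih => exact (ih (child1 B)).mono Set.subset_union_left

end LongestEdgeBisection

open LongestEdgeBisection in
/-- After `t` levels of longest-edge bisection, every sub-box has squared diameter at most
`‖b-a‖₂² (1 - 3/(4m))^t`; in particular the maximal squared diameter tends to `0`. -/
theorem stmt9 {m : ℕ} [NeZero m] (a b : Fin m → ℝ) (hab : ∀ i, a i < b i) :
    (∀ t : ℕ, ∀ B ∈ ID (a, b) t,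
        ∑ i, (B.2 i - B.1 i) ^ 2 ≤ (∑ i, (b i - a i) ^ 2) * (1 - 3 / (4 * (m : ℝ))) ^ t) ∧
      Filter.Tendsto
        (fun t : ℕ => sSup ((fun B : (Fin m → ℝ) × (Fin m → ℝ) =>
          ∑ i, (B.2 i - B.1 i) ^ 2) '' ID (a, b) t)) Filter.atTop (nhds 0) := by
  have hbound : ∀ t, ∀ B ∈ ID (a, b) t, sqDiam B ≤ sqDiam (a, b) * (1 - 3 / (4 * (m : ℝ))) ^ t :=
    fun t B hB => sqDiam_le_of_mem_ID (fun i => (hab i).le) hB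
  refine ⟨hbound, squeeze_zero (g := fun t => sqDiam (a, b) * (1 - 3 / (4 * (m : ℝ))) ^ t)
    (fun t => ?_) (fun t => ?_) ?_⟩
  · exact Real.sSup_nonneg <| Set.forall_mem_image.2 fun B _ => sum_nonneg fun i _ => sq_nonneg _
  · exact csSup_le ((ID_nonempty _ t).image _) (Set.forall_mem_image.2 (hbound t))
  · simpa using (tendsto_pow_atTop_nhds_zero_of_lt_one
      (one_sub_three_div_four_mul_nonneg (by exact_mod_cast NeZero.one_le))
      (one_sub_three_div_four_mul_lt_one (by exact_mod_cast NeZero.pos m))).const_mul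
      (sqDiam (a, b))
end

section
/- Let X = [a,b] ⊂ ℝ^m, f: ℝ^m → ℝ^p continuous, and for each sub-box Y^k (k = 1,...,N) covering X, let f^k: Y^k → ℝ^p satisfy f^k(x) ≤ f(x) componentwise with componentwise gap at most ε (i.e., f_j(x) - f_j^k(x) < ε for all j, x ∈ Y^k). Define S = {x ∈ ⋃_k W_k : ∄ y ∈ ⋃_k W_k with f(y)_j < f(x)_j for all j}, where W_k is the set of weakly efficient solutions of min_{Y^k} f^k. Then every x ∈ S is an ε-weakly efficient solution of min_X f, i.e., there is no y ∈ X with f(y)_j + ε < f(x)_j for all j. -/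
/-!
A point `y ∈ Y k` that violates `ε`-weak efficiency of `x` is dominated by some
`w ∈ W k`, because on a compact set every point is dominated by a weakly efficient one (a minimiser
of the coordinate sum on its sublevel set). Since `fk k` underestimates `f` by less than `ε`,
`f w < fk k w + ε ≤ fk k y + ε ≤ f y + ε < f x` componentwise, so `w` strictly dominates `x`
within `⋃ k, W k`, contradicting `x ∈ S`.
-/

open Set

def weaklyEfficientSet {X ι : Type*} (g : X → ι → ℝ) (Y : Set X) : Set X :=
  {z ∈ Y | ¬∃ y ∈ Y, ∀ j, g y j < g z j}

lemma exists_mem_weaklyEfficientSet_le {X ι : Type*} [TopologicalSpace X] [Fintype ι]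
    [Nonempty ι] {g : X → ι → ℝ} {Y : Set X} (hY : IsCompact Y) (hg : ContinuousOn g Y)
    {y : X} (hy : y ∈ Y) : ∃ w ∈ weaklyEfficientSet g Y, g w ≤ g y := by
  obtain ⟨u, hu, hKu⟩ := continuousOn_iff_isClosed.1 hg (Iic (g y)) isClosed_Iic
  set K := g ⁻¹' Iic (g y) ∩ Y
  have hK : IsCompact K := hKu ▸ hY.inter_left hu
  have hsum : ContinuousOn (fun z => ∑ j, g z j) K :=
    continuousOn_finsetSum _ fun j _ => (continuous_apply j).comp_continuousOn
      (hg.mono inter_subset_right)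
  obtain ⟨w, hwK, hwmin⟩ := hK.exists_isMinOn ⟨y, le_refl (g y), hy⟩ hsum
  refine ⟨w, ⟨hwK.2, ?_⟩, hwK.1⟩
  rintro ⟨z, hz, hzw⟩
  have hzK : z ∈ K := ⟨fun j => (hzw j).le.trans (hwK.1 j), hz⟩
  exact (hwmin hzK).not_gt (Finset.sum_lt_sum_of_nonempty Finset.univ_nonempty fun j _ => hzw j)

theorem stmt10_general (m p N : ℕ) (Y : Fin N → Set (Fin m → ℝ))
    (hYc : ∀ k, IsCompact (Y k))
    (f : (Fin m → ℝ) → Fin p → ℝ)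
    (fk : Fin N → (Fin m → ℝ) → Fin p → ℝ) (hfk : ∀ k, ContinuousOn (fk k) (Y k))
    (ε : ℝ)
    (hle : ∀ k, ∀ x ∈ Y k, ∀ j, fk k x j ≤ f x j)
    (hgap : ∀ k, ∀ x ∈ Y k, ∀ j, f x j - fk k x j < ε)
    (W : Fin N → Set (Fin m → ℝ))
    (hW : ∀ k, W k = {z ∈ Y k | ¬∃ y ∈ Y k, ∀ j, fk k y j < fk k z j})
    (S : Set (Fin m → ℝ))
    (hS : S = {z ∈ ⋃ k, W k | ¬∃ y ∈ ⋃ k, W k, ∀ j, f y j < f z j})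
    (x : Fin m → ℝ) (hx : x ∈ S) :
    ¬∃ y ∈ ⋃ k, Y k, ∀ j, f y j + ε < f x j := by
  rintro ⟨y, hyY, hyx⟩
  rw [hS] at hx
  obtain ⟨hxW, hx_nondom⟩ := hx
  cases isEmpty_or_nonempty (Fin p) with
  | inl _ => exact hx_nondom ⟨x, hxW, isEmptyElim⟩
  | inr _ =>
    obtain ⟨k, hyk⟩ := mem_iUnion.1 hyY
    obtain ⟨w, hwk, hwy⟩ := exists_mem_weaklyEfficientSet_le (hYc k) (hfk k) hyk
    refine hx_nondom ⟨w, mem_iUnion.2 ⟨k, hW k ▸ hwk⟩, fun j => ?_⟩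
    calc f w j < fk k w j + ε := by linarith [hgap k w hwk.1 j]
      _ ≤ fk k y j + ε := by gcongr; exact hwy j
      _ ≤ f y j + ε := by gcongr; exact hle k y hyk j
      _ < f x j := hyx j

/-- The weakly efficient solution set of the piecewise convexification problem consists of
`ε`-weakly efficient solutions of the original problem. -/
theorem stmt10 (m p N : ℕ) (Y : Fin N → Set (Fin m → ℝ))
    (hYc : ∀ k, IsCompact (Y k)) (hYne : ∀ k, (Y k).Nonempty)
    (f : (Fin m → ℝ) → Fin p → ℝ) (hf : Continuous f)
    (fk : Fin N → (Fin m → ℝ) → Fin p → ℝ) (hfk : ∀ k, ContinuousOn (fk k) (Y k))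
    (ε : ℝ) (hε : 0 < ε)
    (hle : ∀ k, ∀ x ∈ Y k, ∀ j, fk k x j ≤ f x j)
    (hgap : ∀ k, ∀ x ∈ Y k, ∀ j, f x j - fk k x j < ε)
    (W : Fin N → Set (Fin m → ℝ))
    (hW : ∀ k, W k = {z ∈ Y k | ¬∃ y ∈ Y k, ∀ j, fk k y j < fk k z j})
    (S : Set (Fin m → ℝ))
    (hS : S = {z ∈ ⋃ k, W k | ¬∃ y ∈ ⋃ k, W k, ∀ j, f y j < f z j})
    (x : Fin m → ℝ) (hx : x ∈ S) :
    ¬∃ y ∈ ⋃ k, Y k, ∀ j, f y j + ε < f x j :=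
  stmt10_general m p N Y hYc f fk hfk ε hle hgap W hW S hS x hx
end

section
/- Let X ⊂ ℝ^m be a compact box covered by sub-boxes Y^1,...,Y^N, f: ℝ^m → ℝ^p continuous, and f^k ≤ f componentwise on Y^k with gap f_j(x) - f_j^k(x) < ε for all j and x ∈ Y^k. Then every weakly efficient solution of min_X f belongs to X^ε_{wE_ap} = {x ∈ ⋃_k W^ε_k : ∄ y ∈ ⋃_k W^ε_k with f(y) + ε·e ≺ f(x)}, where W^ε_k is the set of ε-weakly efficient solutions of min_{Y^k} f^k. -/
/-!
A weakly efficient point `x ∈ Y k` stays `ε`-weakly efficient for the underestimator `fk k`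
on `Y k`: a point `y` with `fk k y + ε ≺ fk k x` would satisfy `f y ≺ fk k y + ε ≺ fk k x ≼ f x`.
It is also not `ε`-dominated by any point of `⋃ k, Wε k`, since those points lie in `X` and
`f y + ε ≺ f x` implies `f y ≺ f x`.
-/

section WeakEfficiency

variable {α ι : Type*} {f g : α → ι → ℝ} {S T : Set α} {ε : ℝ} {x : α}

theorem not_exists_add_lt_of_le_of_sub_lt (hST : S ⊆ T)
    (hle : ∀ y ∈ S, ∀ j, g y j ≤ f y j) (hgap : ∀ y ∈ S, ∀ j, f y j - g y j < ε)
    (hx : x ∈ S) (hweff : ¬∃ y ∈ T, ∀ j, f y j < f x j) :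
    ¬∃ y ∈ S, ∀ j, g y j + ε < g x j := by
  rintro ⟨y, hy, hyx⟩
  refine hweff ⟨y, hST hy, fun j => ?_⟩
  calc f y j < g y j + ε := by linarith [hgap y hy j]
    _ < g x j := hyx j
    _ ≤ f x j := hle x hx j

theorem not_exists_add_lt_of_subset (hST : S ⊆ T) (hε : 0 ≤ ε)
    (hweff : ¬∃ y ∈ T, ∀ j, f y j < f x j) :
    ¬∃ y ∈ S, ∀ j, f y j + ε < f x j := by
  rintro ⟨y, hy, hyx⟩
  exact hweff ⟨y, hST hy, fun j => by linarith [hyx j]⟩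

end WeakEfficiency

theorem stmt12_general (m p N : ℕ) (Y : Fin N → Set (Fin m → ℝ))
    (f : (Fin m → ℝ) → Fin p → ℝ)
    (fk : Fin N → (Fin m → ℝ) → Fin p → ℝ)
    (ε : ℝ) (hε : 0 < ε)
    (hle : ∀ k, ∀ x ∈ Y k, ∀ j, fk k x j ≤ f x j)
    (hgap : ∀ k, ∀ x ∈ Y k, ∀ j, f x j - fk k x j < ε)
    (Wε : Fin N → Set (Fin m → ℝ))
    (hWε : ∀ k, Wε k = {z ∈ Y k | ¬∃ y ∈ Y k, ∀ j, fk k y j + ε < fk k z j})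
    (x : Fin m → ℝ) (hx : x ∈ ⋃ k, Y k)
    (hweff : ¬∃ y ∈ ⋃ k, Y k, ∀ j, f y j < f x j) :
    x ∈ {z ∈ ⋃ k, Wε k | ¬∃ y ∈ ⋃ k, Wε k, ∀ j, f y j + ε < f z j} := by
  obtain ⟨k, hxk⟩ := Set.mem_iUnion.1 hx
  have hWY : ⋃ k, Wε k ⊆ ⋃ k, Y k :=
    Set.iUnion_mono fun l => (hWε l).symm ▸ Set.sep_subset _ _
  refine ⟨Set.mem_iUnion_of_mem k ?_, not_exists_add_lt_of_subset hWY hε.le hweff⟩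
  rw [hWε k]
  exact ⟨hxk, not_exists_add_lt_of_le_of_sub_lt (Set.subset_iUnion Y k)
    (hle k) (hgap k) hxk hweff⟩

/-- Every weakly efficient solution of the original problem belongs to the `ε`-weakly
efficient solution set of the piecewise convexification problem. -/
theorem stmt12 (m p N : ℕ) (Y : Fin N → Set (Fin m → ℝ))
    (f : (Fin m → ℝ) → Fin p → ℝ) (hf : Continuous f)
    (fk : Fin N → (Fin m → ℝ) → Fin p → ℝ)
    (ε : ℝ) (hε : 0 < ε)
    (hle : ∀ k, ∀ x ∈ Y k, ∀ j, fk k x j ≤ f x j)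
    (hgap : ∀ k, ∀ x ∈ Y k, ∀ j, f x j - fk k x j < ε)
    (Wε : Fin N → Set (Fin m → ℝ))
    (hWε : ∀ k, Wε k = {z ∈ Y k | ¬∃ y ∈ Y k, ∀ j, fk k y j + ε < fk k z j})
    (x : Fin m → ℝ) (hx : x ∈ ⋃ k, Y k)
    (hweff : ¬∃ y ∈ ⋃ k, Y k, ∀ j, f y j < f x j) :
    x ∈ {z ∈ ⋃ k, Wε k | ¬∃ y ∈ ⋃ k, Wε k, ∀ j, f y j + ε < f z j} :=
  stmt12_general m p N Y f fk ε hε hle hgap Wε hWε x hx hweff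
end

section
/- Let 0 < δ < ε, X ⊂ ℝ^m a compact box covered by sub-boxes Y^1,...,Y^N, f: ℝ^m → ℝ^p continuous, and f^k ≤ f componentwise on each Y^k with gap f_j(x) - f_j^k(x) < ε - δ for all j, x ∈ Y^k. Then every δ-weakly efficient solution of min_X f belongs to the set X^ε_{wE_ap} = {x ∈ ⋃_k W^ε_k : ∄ y ∈ ⋃_k W^ε_k with f(y) + ε·e ≺ f(x)}, where W^ε_k is the ε-weakly efficient solution set of min_{Y^k} f^k. -/
/-!
A `δ`-weakly efficient point `x ∈ Y k` stays `ε`-weakly efficient for the relaxation `f^k` on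
`Y k`: a point beating `f^k x` by more than `ε` would, since `f` exceeds `f^k` by less than
`ε - δ`, beat `f x` by more than `δ`. The second condition holds because the `W^ε_k` lie in the
union of the `Y k` and `δ < ε`.
-/

def IsWeaklyEfficient {α ι : Type*} (S : Set α) (g : α → ι → ℝ) (t : ℝ) (x : α) : Prop :=
  ¬∃ y ∈ S, ∀ j, g y j + t < g x j

namespace IsWeaklyEfficient

variable {α ι : Type*} {S T : Set α} {g h : α → ι → ℝ} {t t' : ℝ} {x : α}

theorem mono_set (hST : S ⊆ T) (hx : IsWeaklyEfficient T g t x) :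
    IsWeaklyEfficient S g t x :=
  fun ⟨y, hy, hlt⟩ => hx ⟨y, hST hy, hlt⟩

theorem mono_tolerance (htt' : t ≤ t') (hx : IsWeaklyEfficient S g t x) :
    IsWeaklyEfficient S g t' x :=
  fun ⟨y, hy, hlt⟩ => hx ⟨y, hy, fun j => by linarith [hlt j]⟩

theorem of_lowerApprox {δ ε : ℝ} (hle : ∀ j, h x j ≤ g x j)
    (hgap : ∀ y ∈ S, ∀ j, g y j - h y j < ε - δ) (hx : IsWeaklyEfficient S g δ x) :
    IsWeaklyEfficient S h ε x :=
  fun ⟨y, hy, hlt⟩ => hx ⟨y, hy, fun j => by linarith [hgap y hy j, hle j, hlt j]⟩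

end IsWeaklyEfficient

theorem stmt13_general (m p N : ℕ) (Y : Fin N → Set (Fin m → ℝ))
    (f : (Fin m → ℝ) → Fin p → ℝ)
    (fk : Fin N → (Fin m → ℝ) → Fin p → ℝ)
    (δ ε : ℝ) (hδε : δ < ε)
    (hle : ∀ k, ∀ x ∈ Y k, ∀ j, fk k x j ≤ f x j)
    (hgap : ∀ k, ∀ x ∈ Y k, ∀ j, f x j - fk k x j < ε - δ)
    (Wε : Fin N → Set (Fin m → ℝ))
    (hWε : ∀ k, Wε k = {z ∈ Y k | ¬∃ y ∈ Y k, ∀ j, fk k y j + ε < fk k z j})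
    (x : Fin m → ℝ) (hx : x ∈ ⋃ k, Y k)
    (hdweff : ¬∃ y ∈ ⋃ k, Y k, ∀ j, f y j + δ < f x j) :
    x ∈ {z ∈ ⋃ k, Wε k | ¬∃ y ∈ ⋃ k, Wε k, ∀ j, f y j + ε < f z j} := by
  have hx_eff : IsWeaklyEfficient (⋃ k, Y k) f δ x := hdweff
  have hW_sub : ⋃ k, Wε k ⊆ ⋃ k, Y k :=
    Set.iUnion_mono fun k => by rw [hWε k]; exact Set.sep_subset _ _
  obtain ⟨k, hxk⟩ := Set.mem_iUnion.1 hx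
  refine ⟨Set.mem_iUnion.2 ⟨k, ?_⟩, (hx_eff.mono_set hW_sub).mono_tolerance hδε.le⟩
  rw [hWε k]
  exact ⟨hxk, (hx_eff.mono_set (Set.subset_iUnion Y k)).of_lowerApprox
    (hle k x hxk) (hgap k)⟩

/-- Every `δ`-weakly efficient solution of the original problem belongs to the `ε`-weakly
efficient solution set of the piecewise convexification problem, for `0 < δ < ε` and
relaxation gap less than `ε - δ`. -/
theorem stmt13 (m p N : ℕ) (Y : Fin N → Set (Fin m → ℝ))
    (f : (Fin m → ℝ) → Fin p → ℝ) (hf : Continuous f)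
    (fk : Fin N → (Fin m → ℝ) → Fin p → ℝ)
    (δ ε : ℝ) (hδ : 0 < δ) (hδε : δ < ε)
    (hle : ∀ k, ∀ x ∈ Y k, ∀ j, fk k x j ≤ f x j)
    (hgap : ∀ k, ∀ x ∈ Y k, ∀ j, f x j - fk k x j < ε - δ)
    (Wε : Fin N → Set (Fin m → ℝ))
    (hWε : ∀ k, Wε k = {z ∈ Y k | ¬∃ y ∈ Y k, ∀ j, fk k y j + ε < fk k z j})
    (x : Fin m → ℝ) (hx : x ∈ ⋃ k, Y k)
    (hdweff : ¬∃ y ∈ ⋃ k, Y k, ∀ j, f y j + δ < f x j) :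
    x ∈ {z ∈ ⋃ k, Wε k | ¬∃ y ∈ ⋃ k, Wε k, ∀ j, f y j + ε < f z j} :=
  stmt13_general m p N Y f fk δ ε hδε hle hgap Wε hWε x hx hdweff
end

section
/- Under the piecewise convexification hypotheses with componentwise gap f_j(x) - f_j^k(x) < ε for all j, x ∈ Y^k, the set X_{wE_ap} = {x ∈ ⋃_k W_k : ∄ y ∈ ⋃_k W_k with f(y) ≺ f(x)} is contained in X^ε_{wE_ap} = {x ∈ ⋃_k W^ε_k : ∄ y ∈ ⋃_k W^ε_k with f(y) + ε·e ≺ f(x)}. -/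
/-!
A weakly efficient point `z` of `f_k` on `Y^k` is a fortiori `ε`-weakly efficient. If some
`y ∈ W^ε_l` satisfied `f(y) + ε·e ≺ f(z)`, the selection property on the compact box `Y^l`
would give a weakly efficient `w ∈ W_l` with `f^l(w) ≤ f^l(y)`, and then
`f(w) < f^l(w) + ε ≤ f^l(y) + ε ≤ f(y) + ε ≺ f(z)` contradicts the choice of `z`.
-/

open Set

section WeakEfficiency

variable {X ι : Type*}

/-- The witness is a minimiser of `x ↦ max_j (g x j - g y j)` over `S`. -/
theorem exists_weaklyEfficient_le [TopologicalSpace X] [Fintype ι] [Nonempty ι] {S : Set X}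
    (hS : IsCompact S) {g : X → ι → ℝ} (hg : ContinuousOn g S) {y : X} (hy : y ∈ S) :
    ∃ w ∈ S, (∀ j, g w j ≤ g y j) ∧ ¬∃ v ∈ S, ∀ j, g v j < g w j := by
  have hne : (Finset.univ : Finset ι).Nonempty := Finset.univ_nonempty
  let φ : X → ℝ := fun x => Finset.univ.sup' hne fun j => g x j - g y j
  have hφ : ContinuousOn φ S :=
    ContinuousOn.finset_sup'_apply hne fun j _ =>
      ((continuous_apply j).comp_continuousOn hg).sub continuousOn_const
  obtain ⟨w, hwS, hmin⟩ := hS.exists_isMinOn ⟨y, hy⟩ hφ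
  have hφw : φ w ≤ 0 := by simpa [φ] using hmin hy
  have hwj (j : ι) : g w j - g y j ≤ φ w :=
    Finset.le_sup' (fun j => g w j - g y j) (Finset.mem_univ j)
  refine ⟨w, hwS, fun j => by linarith [hwj j], ?_⟩
  rintro ⟨v, hvS, hvw⟩
  have hφv : φ v < φ w :=
    (Finset.sup'_lt_iff hne).2 fun j _ => by linarith [hwj j, hvw j]
  exact (hmin hvS).not_gt hφv

theorem not_exists_add_lt_of_not_exists_lt {S : Set X} {g : X → ι → ℝ} {ε : ℝ} (hε : 0 ≤ ε)
    {z : X} (hz : ¬∃ y ∈ S, ∀ j, g y j < g z j) : ¬∃ y ∈ S, ∀ j, g y j + ε < g z j :=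
  fun ⟨y, hyS, hy⟩ => hz ⟨y, hyS, fun j => by linarith [hy j]⟩

end WeakEfficiency

theorem stmt15_general (m p N : ℕ) (Y : Fin N → Set (Fin m → ℝ))
    (hYc : ∀ k, IsCompact (Y k))
    (f : (Fin m → ℝ) → Fin p → ℝ)
    (fk : Fin N → (Fin m → ℝ) → Fin p → ℝ) (hfk : ∀ k, ContinuousOn (fk k) (Y k))
    (ε : ℝ) (hε : 0 < ε)
    (hle : ∀ k, ∀ x ∈ Y k, ∀ j, fk k x j ≤ f x j)
    (hgap : ∀ k, ∀ x ∈ Y k, ∀ j, f x j - fk k x j < ε)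
    (W : Fin N → Set (Fin m → ℝ))
    (hW : ∀ k, W k = {z ∈ Y k | ¬∃ y ∈ Y k, ∀ j, fk k y j < fk k z j})
    (Wε : Fin N → Set (Fin m → ℝ))
    (hWε : ∀ k, Wε k = {z ∈ Y k | ¬∃ y ∈ Y k, ∀ j, fk k y j + ε < fk k z j}) :
    {z ∈ ⋃ k, W k | ¬∃ y ∈ ⋃ k, W k, ∀ j, f y j < f z j} ⊆
      {z ∈ ⋃ k, Wε k | ¬∃ y ∈ ⋃ k, Wε k, ∀ j, f y j + ε < f z j} := by
  rintro z ⟨hzW, hz_nondom⟩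
  obtain ⟨k, hzk⟩ := mem_iUnion.1 hzW
  rw [hW k] at hzk
  obtain ⟨hzY, hz_eff⟩ := hzk
  have : Nonempty (Fin p) := by
    by_contra h
    exact hz_eff ⟨z, hzY, fun j => (h ⟨j⟩).elim⟩
  refine ⟨mem_iUnion.2 ⟨k, hWε k ▸ ⟨hzY, not_exists_add_lt_of_not_exists_lt hε.le hz_eff⟩⟩, ?_⟩
  rintro ⟨y, hyWε, hy⟩
  obtain ⟨l, hyl⟩ := mem_iUnion.1 hyWε
  have hyY : y ∈ Y l := (hWε l ▸ hyl).1
  obtain ⟨w, hwY, hwy, hw_eff⟩ := exists_weaklyEfficient_le (hYc l) (hfk l) hyY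
  refine hz_nondom ⟨w, mem_iUnion.2 ⟨l, hW l ▸ ⟨hwY, hw_eff⟩⟩, fun j => ?_⟩
  calc f w j < fk l w j + ε := by linarith [hgap l w hwY j]
    _ ≤ fk l y j + ε := by linarith [hwy j]
    _ ≤ f y j + ε := by linarith [hle l y hyY j]
    _ < f z j := hy j

/-- The weakly efficient solution set of the piecewise convexification problem is contained
in its `ε`-weakly efficient solution set. -/
theorem stmt15 (m p N : ℕ) (Y : Fin N → Set (Fin m → ℝ))
    (hYc : ∀ k, IsCompact (Y k)) (hYne : ∀ k, (Y k).Nonempty)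
    (f : (Fin m → ℝ) → Fin p → ℝ) (hf : Continuous f)
    (fk : Fin N → (Fin m → ℝ) → Fin p → ℝ) (hfk : ∀ k, ContinuousOn (fk k) (Y k))
    (ε : ℝ) (hε : 0 < ε)
    (hle : ∀ k, ∀ x ∈ Y k, ∀ j, fk k x j ≤ f x j)
    (hgap : ∀ k, ∀ x ∈ Y k, ∀ j, f x j - fk k x j < ε)
    (W : Fin N → Set (Fin m → ℝ))
    (hW : ∀ k, W k = {z ∈ Y k | ¬∃ y ∈ Y k, ∀ j, fk k y j < fk k z j})
    (Wε : Fin N → Set (Fin m → ℝ))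
    (hWε : ∀ k, Wε k = {z ∈ Y k | ¬∃ y ∈ Y k, ∀ j, fk k y j + ε < fk k z j}) :
    {z ∈ ⋃ k, W k | ¬∃ y ∈ ⋃ k, W k, ∀ j, f y j < f z j} ⊆
      {z ∈ ⋃ k, Wε k | ¬∃ y ∈ ⋃ k, Wε k, ∀ j, f y j + ε < f z j} :=
  stmt15_general m p N Y hYc f fk hfk ε hε hle hgap W hW Wε hWε
end

section
/- Let Y = [a,b] ⊂ ℝ^m, f: ℝ^m → ℝ twice continuously differentiable, α > 0, L > 0 with L ≥ √m·|∂f/∂x_i(x)| for all i and x ∈ Y, and suppose F(x) = f(x) + (α/2)∑_i (a_i - x_i)(b_i - x_i) is convex on Y. If the width ω(Y) = ‖b - a‖₂ satisfies ω(Y) ≤ -4L/α + √(16L²/α² + 2ε/α), then |f(x) - ν| ≤ ε/4 for all x ∈ Y, where ν = min_{x∈Y} F(x). If moreover (α/8)·ω(Y)² ≤ ε/8, then |F(x) - ν| ≤ 3ε/8 for all x ∈ Y. -/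
open Finset

/-- If the box `Y = [a,b]` is small enough, the αBB relaxation minimum `ν` is within `ε/4`
of every value of `f` on `Y`; if additionally `(α/8)ω(Y)² ≤ ε/8`, then `ν` is within
`3ε/8` of every value of `F` on `Y`. -/
theorem stmt16 (m : ℕ) (a b : Fin m → ℝ) (hab : ∀ i, a i ≤ b i)
    (f : (Fin m → ℝ) → ℝ) (hf : ContDiff ℝ 2 f)
    (α : ℝ) (hα : 0 < α) (ε : ℝ) (hε : 0 < ε)
    (L : ℝ) (hL : 0 < L)
    (hLd : ∀ i, ∀ x ∈ Set.Icc a b, Real.sqrt m * |fderiv ℝ f x (Pi.single i 1)| ≤ L)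
    (F : (Fin m → ℝ) → ℝ)
    (hF : F = fun x => f x + α / 2 * ∑ i, (a i - x i) * (b i - x i))
    (hFconv : ConvexOn ℝ (Set.Icc a b) F)
    (ν : ℝ) (hν : IsLeast (F '' Set.Icc a b) ν)
    (hω : Real.sqrt (∑ i, (b i - a i) ^ 2) ≤
      -(4 * L) / α + Real.sqrt (16 * L ^ 2 / α ^ 2 + 2 * ε / α)) :
    (∀ x ∈ Set.Icc a b, |f x - ν| ≤ ε / 4) ∧
      (α / 8 * Real.sqrt (∑ i, (b i - a i) ^ 2) ^ 2 ≤ ε / 8 →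
        ∀ x ∈ Set.Icc a b, |F x - ν| ≤ 3 * ε / 8) := by
  set ω := Real.sqrt (∑ i, (b i - a i) ^ 2) with hωdef
  have hω0 : 0 ≤ ω := Real.sqrt_nonneg _
  have hω2 : ω ^ 2 = ∑ i, (b i - a i) ^ 2 := Real.sq_sqrt (by positivity)
  -- Key numeric inequality
  have hkey : L * ω + α * ω ^ 2 / 8 ≤ ε / 4 := by
    have harg : (0:ℝ) ≤ 16 * L ^ 2 / α ^ 2 + 2 * ε / α := by positivity
    have hs : (Real.sqrt (16 * L ^ 2 / α ^ 2 + 2 * ε / α)) ^ 2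
        = 16 * L ^ 2 / α ^ 2 + 2 * ε / α := Real.sq_sqrt harg
    set s := Real.sqrt (16 * L ^ 2 / α ^ 2 + 2 * ε / α) with hsd
    have h1 : ω + 4 * L / α ≤ s := by
      have : -(4 * L) / α + s = s - 4 * L / α := by ring
      rw [this] at hω; linarith
    have hc4 : α * (4 * L / α) = 4 * L := by field_simp
    have h1' : α * ω + 4 * L ≤ α * s := by
      have := mul_le_mul_of_nonneg_left h1 hα.le
      rw [mul_add, hc4] at this; exact this
    have hnn : (0:ℝ) ≤ α * ω + 4 * L := by positivity
    have h2 : (α * ω + 4 * L) ^ 2 ≤ (α * s) ^ 2 := by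
      apply pow_le_pow_left₀ hnn h1'
    have h3 : (α * s) ^ 2 = 16 * L ^ 2 + 2 * ε * α := by
      rw [mul_pow, hs]; field_simp
    rw [h3] at h2
    have h4 : α * (α * ω ^ 2 + 8 * L * ω) ≤ α * (2 * ε) := by nlinarith
    have h5 : α * ω ^ 2 + 8 * L * ω ≤ 2 * ε := le_of_mul_le_mul_left h4 hα
    linarith
  -- membership facts
  have hmem : ∀ x ∈ Set.Icc a b, ∀ i, a i ≤ x i ∧ x i ≤ b i := by
    intro x hx i; exact ⟨hx.1 i, hx.2 i⟩
  -- f is differentiable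
  have hdf : Differentiable ℝ f := hf.differentiable (by norm_num)
  -- gradient bound
  have hgrad : ∀ z ∈ Set.Icc a b, ∀ v : Fin m → ℝ,
      |fderiv ℝ f z v| ≤ L * Real.sqrt (∑ i, (v i) ^ 2) := by
    intro z hz v
    have hv : v = ∑ i, (v i) • (Pi.single i 1 : Fin m → ℝ) := by
      funext j
      simp [Finset.sum_apply, Pi.single_apply]
    have hmap : fderiv ℝ f z v = ∑ i, v i * fderiv ℝ f z (Pi.single i 1) := by
      conv_lhs => rw [hv]
      rw [map_sum]
      simp [smul_eq_mul]
    rw [hmap]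
    have h1 : |∑ i, v i * fderiv ℝ f z (Pi.single i 1)|
        ≤ ∑ i, |v i| * |fderiv ℝ f z (Pi.single i 1)| := by
      refine (Finset.abs_sum_le_sum_abs _ _).trans_eq ?_
      exact Finset.sum_congr rfl fun i _ => abs_mul _ _
    have hcs : (∑ i, |v i| * |fderiv ℝ f z (Pi.single i 1)|) ^ 2
        ≤ (∑ i, |v i| ^ 2) * ∑ i, |fderiv ℝ f z (Pi.single i 1)| ^ 2 :=
      Finset.sum_mul_sq_le_sq_mul_sq _ _ _
    have hd2 : (∑ i, |fderiv ℝ f z (Pi.single i 1)| ^ 2) ≤ L ^ 2 := by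
      rcases Nat.eq_zero_or_pos m with hm | hm
      · subst hm; simp; positivity
      · have hmR : (0:ℝ) < m := by exact_mod_cast hm
        have : ∀ i : Fin m, |fderiv ℝ f z (Pi.single i 1)| ^ 2 ≤ L ^ 2 / m := by
          intro i
          have hsq : ((m:ℝ)) * |fderiv ℝ f z (Pi.single i 1)| ^ 2 ≤ L ^ 2 := by
            have h := pow_le_pow_left₀ (by positivity) (hLd i z hz) 2
            rwa [mul_pow, Real.sq_sqrt (Nat.cast_nonneg m)] at h
          rw [le_div_iff₀ hmR]
          linarith
        calc (∑ i, |fderiv ℝ f z (Pi.single i 1)| ^ 2) ≤ ∑ _i : Fin m, L ^ 2 / m :=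
              Finset.sum_le_sum fun i _ => this i
          _ = m * (L ^ 2 / m) := by rw [Finset.sum_const]; simp [mul_comm]
          _ = L ^ 2 := by field_simp
    have hsum_nonneg : (0:ℝ) ≤ ∑ i, |v i| * |fderiv ℝ f z (Pi.single i 1)| :=
      Finset.sum_nonneg fun i _ => mul_nonneg (abs_nonneg _) (abs_nonneg _)
    have h2 : (∑ i, |v i| * |fderiv ℝ f z (Pi.single i 1)|)
        ≤ Real.sqrt (∑ i, (v i) ^ 2) * L := by
      have hv2 : (∑ i, |v i| ^ 2) = ∑ i, (v i) ^ 2 := by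
        exact Finset.sum_congr rfl fun i _ => sq_abs _
      have hR : (Real.sqrt (∑ i, (v i) ^ 2) * L) ^ 2
          = (∑ i, (v i) ^ 2) * L ^ 2 := by
        rw [mul_pow, Real.sq_sqrt (by positivity)]
      have hfinal : (∑ i, |v i| * |fderiv ℝ f z (Pi.single i 1)|) ^ 2
          ≤ (Real.sqrt (∑ i, (v i) ^ 2) * L) ^ 2 := by
        rw [hR]
        calc _ ≤ (∑ i, |v i| ^ 2) * ∑ i, |fderiv ℝ f z (Pi.single i 1)| ^ 2 := hcs
          _ ≤ (∑ i, (v i) ^ 2) * L ^ 2 := by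
              rw [hv2]
              exact mul_le_mul_of_nonneg_left hd2 (by positivity)
      have hRnn : (0:ℝ) ≤ Real.sqrt (∑ i, (v i) ^ 2) * L := by positivity
      nlinarith
    calc |∑ i, v i * fderiv ℝ f z (Pi.single i 1)| ≤ _ := h1
      _ ≤ Real.sqrt (∑ i, (v i) ^ 2) * L := h2
      _ = L * Real.sqrt (∑ i, (v i) ^ 2) := mul_comm _ _
  -- Lipschitz-type bound over the box
  have hlip : ∀ x ∈ Set.Icc a b, ∀ y ∈ Set.Icc a b, |f x - f y| ≤ L * ω := by
    intro x hx y hy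
    have hxyω : Real.sqrt (∑ i, (x i - y i) ^ 2) ≤ ω := by
      apply Real.sqrt_le_sqrt
      refine Finset.sum_le_sum fun i _ => ?_
      have h1 := (hmem x hx i).1; have h2 := (hmem x hx i).2
      have h3 := (hmem y hy i).1; have h4 := (hmem y hy i).2
      have : |x i - y i| ≤ b i - a i := by rw [abs_le]; constructor <;> linarith
      calc (x i - y i) ^ 2 = |x i - y i| ^ 2 := (sq_abs _).symm
        _ ≤ (b i - a i) ^ 2 := by nlinarith [abs_nonneg (x i - y i)]
    set g : ℝ → ℝ := fun t => f (y + t • (x - y)) with hg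
    have hseg : ∀ t ∈ Set.Icc (0:ℝ) 1, y + t • (x - y) ∈ Set.Icc a b := by
      intro t ht
      have hc : (1 - t) • y + t • x ∈ Set.Icc a b :=
        (convex_Icc a b) hy hx (by linarith [ht.2]) ht.1 (by ring)
      have : y + t • (x - y) = (1 - t) • y + t • x := by module
      rw [this]; exact hc
    have hderiv : ∀ t ∈ Set.Icc (0:ℝ) 1,
        HasDerivWithinAt g (fderiv ℝ f (y + t • (x - y)) (x - y)) (Set.Icc 0 1) t := by
      intro t _
      have h1 : HasDerivAt (fun s : ℝ => y + s • (x - y)) (x - y) t := by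
        simpa using ((hasDerivAt_id t).smul_const (x - y)).const_add y
      exact ((hdf _).hasFDerivAt.comp_hasDerivAt t h1).hasDerivWithinAt
    have hbound : ∀ t ∈ Set.Ico (0:ℝ) 1,
        ‖fderiv ℝ f (y + t • (x - y)) (x - y)‖ ≤ L * ω := by
      intro t ht
      have hmem' := hseg t ⟨ht.1, ht.2.le⟩
      have := hgrad _ hmem' (x - y)
      have heq : (∑ i, ((x - y) i) ^ 2) = ∑ i, (x i - y i) ^ 2 := by
        refine Finset.sum_congr rfl fun i _ => by simp
      rw [heq] at this
      calc ‖fderiv ℝ f (y + t • (x - y)) (x - y)‖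
          = |fderiv ℝ f (y + t • (x - y)) (x - y)| := rfl
        _ ≤ L * Real.sqrt (∑ i, (x i - y i) ^ 2) := this
        _ ≤ L * ω := mul_le_mul_of_nonneg_left hxyω hL.le
    have := norm_image_sub_le_of_norm_deriv_le_segment' hderiv hbound 1
      (Set.right_mem_Icc.2 zero_le_one)
    have hg1 : g 1 = f x := by simp [hg]
    have hg0 : g 0 = f y := by simp [hg]
    rw [hg1, hg0] at this
    simpa using this
  -- quadratic gap bound
  have hquad : ∀ x ∈ Set.Icc a b, 0 ≤ f x - F x ∧ f x - F x ≤ α * ω ^ 2 / 8 := by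
    intro x hx
    have h1 : f x - F x = α / 2 * ∑ i, (x i - a i) * (b i - x i) := by
      rw [hF]
      have : ∑ i, (x i - a i) * (b i - x i) = -∑ i, (a i - x i) * (b i - x i) := by
        rw [← Finset.sum_neg_distrib]
        exact Finset.sum_congr rfl fun i _ => by ring
      rw [this]; ring
    constructor
    · rw [h1]
      have : (0:ℝ) ≤ ∑ i, (x i - a i) * (b i - x i) :=
        Finset.sum_nonneg fun i _ => mul_nonneg
          (by linarith [(hmem x hx i).1]) (by linarith [(hmem x hx i).2])
      positivity
    · rw [h1, hω2]
      have hterm : ∀ i : Fin m, (x i - a i) * (b i - x i) ≤ (b i - a i) ^ 2 / 4 := by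
        intro i
        have h1 := (hmem x hx i).1; have h2 := (hmem x hx i).2
        nlinarith [sq_nonneg ((x i - a i) - (b i - x i))]
      have hsum : ∑ i, (x i - a i) * (b i - x i) ≤ ∑ i, (b i - a i) ^ 2 / 4 :=
        Finset.sum_le_sum fun i _ => hterm i
      have : ∑ i, (b i - a i) ^ 2 / 4 = (∑ i, (b i - a i) ^ 2) / 4 := by
        rw [Finset.sum_div]
      rw [this] at hsum
      calc α / 2 * ∑ i, (x i - a i) * (b i - x i)
          ≤ α / 2 * ((∑ i, (b i - a i) ^ 2) / 4) :=
            mul_le_mul_of_nonneg_left hsum (by positivity)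
        _ = α * (∑ i, (b i - a i) ^ 2) / 8 := by ring
  obtain ⟨⟨y, hy, hFy⟩, hlb⟩ := hν
  have hfirst : ∀ x ∈ Set.Icc a b, |f x - ν| ≤ ε / 4 := by
    intro x hx
    have hνFx : ν ≤ F x := hlb ⟨x, hx, rfl⟩
    have hFfx := (hquad x hx).1
    have hup : f x - ν ≤ ε / 4 := by
      have h1 := hlip x hx y hy
      have h2 := (hquad y hy).2
      have : f x - ν = (f x - f y) + (f y - F y) := by rw [hFy]; ring
      have habs : f x - f y ≤ L * ω := (abs_le.1 h1).2
      linarith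
    rw [abs_le]; constructor <;> [linarith; exact hup]
  refine ⟨hfirst, fun _ x hx => ?_⟩
  have hνFx : ν ≤ F x := hlb ⟨x, hx, rfl⟩
  have hFfx := (hquad x hx).1
  have h := hfirst x hx
  rw [abs_le] at *
  constructor <;> [linarith; linarith [h.2]]
end

section
/- Let X ⊂ ℝ^m be a compact box covered by sub-boxes Y^1,...,Y^N, f: ℝ^m → ℝ^p continuous, λ ∈ ℝ^p with λ_j > 0 for all j, and for each k let f^k ≤ f componentwise on Y^k. Suppose for each k: (i) f_j(x) - f_j^k(x) < ε/8 for all j and x ∈ Y^k, and (ii) |f_j^k(x) - ν_j^k| ≤ 3ε/8 for all j and x ∈ Y^k, where ν_j^k = min_{Y^k} f_j^k. Let x^k be a minimizer of ∑_j λ_j f_j^k over Y^k, A = {x^1,...,x^N}, and S = {x ∈ A : ∄ y ∈ A with f(y) ⪯ f(x)}. Then every x ∈ S is an ε-efficient solution of min_X f: no y ∈ X satisfies f(y) + ε·e ⪯ f(x). -/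
/-!
On a sub-box `Y k`, `f_j` exceeds its underestimator `f_j^k` by less than `ε/8`, and `f_j^k`
stays within `3ε/8` of its minimum, so any two values of `f_j` on `Y k` differ by less than `ε/2`.
Hence if `y ∈ Y k` had `f y + ε ⪯ f x`, the point `x^k ∈ Y k` would satisfy
`f x^k ≤ f y + ε ⪯ f x` and dominate `x`, which contradicts `x ∈ S`.
-/

theorem apply_lt_apply_add_of_underestimator {α : Type*} {s : Set α} {F G : α → ℝ}
    {ν δ c : ℝ} (hle : ∀ x ∈ s, G x ≤ F x) (hgap : ∀ x ∈ s, F x - G x < δ)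
    (hν : ν ∈ lowerBounds (G '' s)) (hnear : ∀ x ∈ s, |G x - ν| ≤ c)
    {a b : α} (ha : a ∈ s) (hb : b ∈ s) : F a < F b + (δ + c) := by
  have hGa : G a ≤ ν + c := by linarith [(abs_le.mp (hnear a ha)).2]
  have hνb : ν ≤ G b := hν ⟨b, hb, rfl⟩
  linarith [hgap a ha, hle b hb]

theorem stmt17_general (m p N : ℕ) (Y : Fin N → Set (Fin m → ℝ))
    (f : (Fin m → ℝ) → Fin p → ℝ)
    (fk : Fin N → (Fin m → ℝ) → Fin p → ℝ)
    (ε : ℝ) (hε : 0 < ε)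
    (hle : ∀ k, ∀ x ∈ Y k, ∀ j, fk k x j ≤ f x j)
    (hgap : ∀ k, ∀ x ∈ Y k, ∀ j, f x j - fk k x j < ε / 8)
    (ν : Fin N → Fin p → ℝ)
    (hν : ∀ k j, IsLeast ((fun x => fk k x j) '' Y k) (ν k j))
    (hnear : ∀ k, ∀ x ∈ Y k, ∀ j, |fk k x j - ν k j| ≤ 3 * ε / 8)
    (xk : Fin N → (Fin m → ℝ)) (hxkmem : ∀ k, xk k ∈ Y k)
    (x : Fin m → ℝ)
    (hxS : x ∈ {z ∈ Set.range xk |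
      ¬∃ y ∈ Set.range xk, (∀ j, f y j ≤ f z j) ∧ f y ≠ f z}) :
    ¬∃ y ∈ ⋃ k, Y k, (∀ j, f y j + ε ≤ f x j) ∧ (fun j => f y j + ε) ≠ f x := by
  rintro ⟨y, hy, hdom⟩
  obtain ⟨k, hyk⟩ := Set.mem_iUnion.mp hy
  have hclose : f (xk k) ≤ fun j => f y j + ε := fun j => by
    have := apply_lt_apply_add_of_underestimator (hle k · · j) (hgap k · · j) (hν k j).2
      (hnear k · · j) (hxkmem k) hyk
    linarith
  exact hxS.2 ⟨xk k, Set.mem_range_self k,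
    lt_iff_le_and_ne.mp (hclose.trans_lt (lt_iff_le_and_ne.mpr hdom))⟩

/-- Convergence of the piecewise convexification algorithm: the non-dominated points among
the weighted-sum minimizers of the convex sub-problems are `ε`-efficient solutions of the
original problem. -/
theorem stmt17 (m p N : ℕ) (Y : Fin N → Set (Fin m → ℝ))
    (hYc : ∀ k, IsCompact (Y k)) (hYne : ∀ k, (Y k).Nonempty)
    (f : (Fin m → ℝ) → Fin p → ℝ) (hf : Continuous f)
    (fk : Fin N → (Fin m → ℝ) → Fin p → ℝ) (hfk : ∀ k, ContinuousOn (fk k) (Y k))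
    (lam : Fin p → ℝ) (hlam : ∀ j, 0 < lam j)
    (ε : ℝ) (hε : 0 < ε)
    (hle : ∀ k, ∀ x ∈ Y k, ∀ j, fk k x j ≤ f x j)
    (hgap : ∀ k, ∀ x ∈ Y k, ∀ j, f x j - fk k x j < ε / 8)
    (ν : Fin N → Fin p → ℝ)
    (hν : ∀ k j, IsLeast ((fun x => fk k x j) '' Y k) (ν k j))
    (hnear : ∀ k, ∀ x ∈ Y k, ∀ j, |fk k x j - ν k j| ≤ 3 * ε / 8)
    (xk : Fin N → (Fin m → ℝ)) (hxkmem : ∀ k, xk k ∈ Y k)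
    (hxkopt : ∀ k, ∀ y ∈ Y k, ∑ j, lam j * fk k (xk k) j ≤ ∑ j, lam j * fk k y j)
    (x : Fin m → ℝ)
    (hxS : x ∈ {z ∈ Set.range xk |
      ¬∃ y ∈ Set.range xk, (∀ j, f y j ≤ f z j) ∧ f y ≠ f z}) :
    ¬∃ y ∈ ⋃ k, Y k, (∀ j, f y j + ε ≤ f x j) ∧ (fun j => f y j + ε) ≠ f x :=
  stmt17_general m p N Y f fk ε hε hle hgap ν hν hnear xk hxkmem x hxS
end
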